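/- Let M and N be monoids, let A be a finitely presented right M-act, and let B be a finitely presented right N-act. Suppose at least one of the following holds: (1) A is a one-element M-act; (2) N is a trivial (one-element) monoid; (3) N contains a left zero (an element z with zn=z for all n∈N); (4) A is finite and N is a finitely generated monoid. Then the wreath product A≀B is a finitely presented 𝒲(M,N|A)-act. -/

import Mathlib

/-- The axioms for a right action of a monoid `M` on a set `A`:
`act a 1 = a` and `act a (m * n) = act (act a m) n`. -/
def IsAct {M A : Type*} [Monoid M] (act : A → M → A) : Prop :=
  (∀ a, act a 1 = a) ∧ ∀ a m n, act a (m * n) = act (act a m) n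

/-- `U ⊆ A` is a generating set for the act `(A, act)`: every element of `A`
has the form `u m` with `u ∈ U`, `m ∈ M`. -/
def Generates {M A : Type*} (act : A → M → A) (U : Set A) : Prop :=
  ∀ a : A, ∃ u ∈ U, ∃ m : M, act u m = a

/-- An act is finitely generated if it has a finite generating set. -/
def ActFG {M A : Type*} (act : A → M → A) : Prop :=
  ∃ U : Set A, U.Finite ∧ Generates act U

/-- The free `M`-act on a set `X`: the set `X × M` with action `(x, m) n = (x, m n)`. -/
def FreeAct (M : Type*) [Monoid M] (X : Type*) : X × M → M → X × M :=
  fun p m => (p.1, p.2 * m)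

/-- The congruence on the act `(A, act)` generated by a set `R ⊆ A × A`:
the smallest equivalence relation containing `R` that is compatible with the action. -/
def CongGen {M A : Type*} (act : A → M → A) (R : Set (A × A)) (a b : A) : Prop :=
  ∀ r : A → A → Prop, Equivalence r →
    (∀ x y (m : M), r x y → r (act x m) (act y m)) →
    (∀ p ∈ R, r p.1 p.2) → r a b

/-- An `M`-act `(A, act)` is finitely presented if it is defined by a presentation
`⟨X | R⟩` with `X` and `R` finite, i.e. there is a surjective `M`-equivariant map
`π : F_X → A` whose kernel is the congruence on `F_X` generated by `R`. -/
def ActFP (M : Type*) [Monoid M] {A : Type*} (act : A → M → A) : Prop :=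
  ∃ (X : Type) (_ : Finite X) (R : Set ((X × M) × (X × M))), R.Finite ∧
    ∃ π : X × M → A, Function.Surjective π ∧
      (∀ p m, π (FreeAct M X p m) = act (π p) m) ∧
      ∀ w₁ w₂ : X × M, π w₁ = π w₂ ↔ CongGen (FreeAct M X) R w₁ w₂

/-- The diagonal `M`-act: `M × M` with action `(a, b) c = (a c, b c)`. -/
def DiagAct (M : Type*) [Monoid M] : M × M → M → M × M :=
  fun p c => (p.1 * c, p.2 * c)

/-- The action of the wreath product monoid `𝒲(M, N | A)` (carried on `M × (A → N)`)
on the wreath product `A ≀ B` (carried on `A × B`): `(a, b)(m, θ) = (a m, b (a θ))`. -/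
def WreathAct {M N A B : Type*} (actA : A → M → A) (actB : B → N → B) :
    A × B → M × (A → N) → A × B :=
  fun p w => (actA p.1 w.1, actB p.2 (w.2 p.1))

/-- The multiplication of the wreath product monoid `𝒲(M, N | A)` on `M × (A → N)`:
`(m, θ)(n, φ) = (m n, θ · ᵐφ)`, where `a (θ · ᵐφ) = (a θ) ((a m) φ)`. -/
def wreathMul {M N A : Type*} [Monoid M] [Monoid N] (act : A → M → A) :
    M × (A → N) → M × (A → N) → M × (A → N) :=
  fun p q => (p.1 * q.1, fun a => p.2 a * q.2 (act a p.1))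

/-- The wreath product monoid `𝒲(M, N | A)` of `M` by `N` through the `M`-act `A`,
carried on the set `M × N^A`, with identity `(1_M, c_{1_N})`. -/
def WreathMonoid {M N A : Type*} [Monoid M] [Monoid N] (act : A → M → A)
    (hact : IsAct act) : Monoid (M × (A → N)) where
  mul := wreathMul act
  one := (1, fun _ => 1)
  mul_assoc := by
    rintro ⟨m, θ⟩ ⟨n, φ⟩ ⟨k, ψ⟩
    show wreathMul act (wreathMul act _ _) _ = wreathMul act _ (wreathMul act _ _)
    simp [wreathMul, mul_assoc, hact.2]
  one_mul := by
    rintro ⟨m, θ⟩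
    show wreathMul act (1, fun _ => 1) _ = _
    simp [wreathMul, hact.1]
  mul_one := by
    rintro ⟨m, θ⟩
    show wreathMul act _ (1, fun _ => 1) = _
    simp [wreathMul]
  npow := @npowRec _ ⟨(1, fun _ => 1)⟩ ⟨wreathMul act⟩
  npow_zero := by intros; rfl
  npow_succ := by intros; rfl

/-! If `X` generates `A` and `Y` generates `B`, the pairs `(x, y)` generate `A ≀ B`: the word
`((x, y), (m, θ))` of the free act on `X × Y` is sent to `(x m, y θ(x))`. As relations take those
of `A` (with `θ = 1`), those of `B` (with `m = 1`), and `(x, y)(1, 1) = (x, y)(1, e)` for the maps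
`e` of a finite set `E x` with `e x = 1`. If left multiplication by elements of `E x` connects
every `θ` to the constant map with value `θ x`, then two words with the same image are related:
make both `θ`s constant, then move `(x, m)` by the relations of `A` and `(y, θ x)` by those of
`B`. In the four cases such sets exist: `E x = ∅` if `A` or `N` is trivial, the single map equal
to `1` at `x` and to the left zero `z` elsewhere, or all `Pi.mulSingle b s` with `b ≠ x` and `s`
in a finite generating set of `N` when `A` is finite. -/

open Function

section CongGen

variable {M M' α β : Type*} {act : α → M → α} {R : Set (α × α)} {a b c : α}

theorem CongGen.of_mem {p : α × α} (hp : p ∈ R) : CongGen act R p.1 p.2 :=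
  fun _ _ _ hR => hR p hp

theorem CongGen.refl (a : α) : CongGen act R a a :=
  fun _ hr _ _ => hr.refl a

theorem CongGen.symm (h : CongGen act R a b) : CongGen act R b a :=
  fun r hr hc hR => hr.symm (h r hr hc hR)

theorem CongGen.trans (h₁ : CongGen act R a b) (h₂ : CongGen act R b c) : CongGen act R a c :=
  fun r hr hc hR => hr.trans (h₁ r hr hc hR) (h₂ r hr hc hR)

theorem CongGen.act_right (h : CongGen act R a b) (m : M) : CongGen act R (act a m) (act b m) :=
  fun r hr hc hR => hc _ _ m (h r hr hc hR)

theorem CongGen.apply_eq {f : α → β} (hf : ∀ x y (m : M), f x = f y → f (act x m) = f (act y m))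
    (hR : ∀ p ∈ R, f p.1 = f p.2) (h : CongGen act R a b) : f a = f b :=
  h (fun x y => f x = f y) ⟨fun _ => rfl, Eq.symm, Eq.trans⟩ hf hR

theorem CongGen.map {act' : β → M' → β} {R' : Set (β × β)} {f : α → β} (g : M → M')
    (hf : ∀ x m, f (act x m) = act' (f x) (g m)) (hR : ∀ p ∈ R, CongGen act' R' (f p.1) (f p.2))
    (h : CongGen act R a b) : CongGen act' R' (f a) (f b) :=
  h (fun x y => CongGen act' R' (f x) (f y)) ⟨fun _ => .refl _, .symm, .trans⟩
    (fun x y m hxy => by simpa only [hf] using hxy.act_right (g m)) hR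

theorem CongGen.of_eqvGen {γ : Type*} {r : γ → γ → Prop} {u v : γ} (f : γ → α)
    (hr : ∀ u v, r u v → CongGen act R (f u) (f v)) (h : Relation.EqvGen r u v) :
    CongGen act R (f u) (f v) := by
  induction h with
  | rel u v huv => exact hr u v huv
  | refl => exact .refl _
  | symm _ _ _ ih => exact ih.symm
  | trans _ _ _ _ _ ih₁ ih₂ => exact ih₁.trans ih₂

end CongGen

section Presentation

variable {M X A : Type*} [Monoid M]

structure IsPresentation (act : A → M → A) (R : Set ((X × M) × (X × M))) (π : X × M → A) :
    Prop where
  surjective : Surjective π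
  map_act : ∀ p m, π (FreeAct M X p m) = act (π p) m
  ker : ∀ w₁ w₂, π w₁ = π w₂ ↔ CongGen (FreeAct M X) R w₁ w₂

theorem actFP_iff {act : A → M → A} :
    ActFP M act ↔ ∃ (X : Type) (_ : Finite X) (R : Set ((X × M) × (X × M))), R.Finite ∧
      ∃ π : X × M → A, IsPresentation act R π :=
  ⟨fun ⟨X, hX, R, hR, π, hs, ha, hk⟩ => ⟨X, hX, R, hR, π, hs, ha, hk⟩,
    fun ⟨X, hX, R, hR, π, hs, ha, hk⟩ => ⟨X, hX, R, hR, π, hs, ha, hk⟩⟩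

variable {act : A → M → A} {R : Set ((X × M) × (X × M))} {π : X × M → A}

theorem IsPresentation.map_mk (h : IsPresentation act R π) (x : X) (m : M) :
    π (x, m) = act (π (x, 1)) m := by
  simpa [FreeAct] using h.map_act (x, 1) m

theorem IsPresentation.map_eq_of_mem (h : IsPresentation act R π) {p : (X × M) × (X × M)}
    (hp : p ∈ R) : π p.1 = π p.2 :=
  (h.ker _ _).2 (.of_mem hp)

end Presentation

section Collapsing

variable {A N : Type*} [Monoid N]

structure IsCollapsingFamily (E : A → Set (A → N)) : Prop where
  finite : ∀ a, (E a).Finite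
  apply_self : ∀ a, ∀ e ∈ E a, e a = 1
  eqvGen_const : ∀ a θ, Relation.EqvGen (fun u v => ∃ e ∈ E a, v = e * u) θ (const A (θ a))

theorem isCollapsingFamily_empty (h : ∀ (θ : A → N) a b, θ a = θ b) :
    IsCollapsingFamily (fun _ : A => (∅ : Set (A → N))) where
  finite _ := Set.finite_empty
  apply_self _ _ he := he.elim
  eqvGen_const a θ := by
    rw [show const A (θ a) = θ from funext fun b => h θ a b]
    exact .refl _

theorem isCollapsingFamily_of_leftZero [DecidableEq A] {z : N} (hz : ∀ n, z * n = z) :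
    IsCollapsingFamily (fun a => {update (const A z) a (1 : N)}) where
  finite _ := Set.finite_singleton _
  apply_self a _ he := he ▸ update_self ..
  eqvGen_const a θ := by
    have hmul : update (const A z) a 1 * θ = update (const A z) a 1 * const A (θ a) := by
      funext b
      by_cases hb : b = a
      · subst hb; simp
      · simp [hb, hz]
    exact .trans _ _ _ (.rel _ _ ⟨_, rfl, rfl⟩) (hmul ▸ .symm _ _ (.rel _ _ ⟨_, rfl, rfl⟩))

theorem eqvGen_mul_of_mem_closure {P : Type*} [Monoid P] {E : Set P} {φ : P}
    (hφ : φ ∈ Submonoid.closure E) (u : P) :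
    Relation.EqvGen (fun u v => ∃ e ∈ E, v = e * u) u (φ * u) := by
  induction hφ using Submonoid.closure_induction generalizing u with
  | mem e he => exact .rel _ _ ⟨e, he, rfl⟩
  | one => rw [one_mul]; exact .refl _
  | mul φ ψ _ _ ihφ ihψ => rw [mul_assoc]; exact .trans _ _ _ (ihψ u) (ihφ (ψ * u))

theorem mem_closure_mulSingle [Finite A] [DecidableEq A] {S : Set N}
    (hS : Submonoid.closure S = ⊤) {a : A} {φ : A → N} (hφ : φ a = 1) :
    φ ∈ Submonoid.closure (⋃ b ∈ ({a}ᶜ : Set A), Pi.mulSingle b '' S) := by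
  refine Submonoid.pi_mem_of_mulSingle_mem φ fun b => ?_
  by_cases hb : b = a
  · subst hb
    simp [hφ]
  · have hφb : Pi.mulSingle b (φ b) ∈
        (Submonoid.closure S).map (MonoidHom.mulSingle (fun _ => N) b) :=
      ⟨φ b, hS ▸ Submonoid.mem_top _, rfl⟩
    rw [MonoidHom.map_mclosure] at hφb
    exact Submonoid.closure_mono (Set.subset_biUnion_of_mem (u := fun b => Pi.mulSingle b '' S)
      (Set.mem_compl_singleton_iff.mpr hb)) hφb

theorem isCollapsingFamily_mulSingle [Finite A] [DecidableEq A] {S : Set N} (hSf : S.Finite)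
    (hS : Submonoid.closure S = ⊤) :
    IsCollapsingFamily (fun a => ⋃ b ∈ ({a}ᶜ : Set A), Pi.mulSingle b '' S) where
  finite _ := (Set.toFinite _).biUnion fun _ _ => hSf.image _
  apply_self a e he := by
    simp only [Set.mem_iUnion, Set.mem_image] at he
    obtain ⟨b, hb, s, -, rfl⟩ := he
    exact Pi.mulSingle_eq_of_ne' (M := fun _ => N) (Set.mem_compl_singleton_iff.mp hb) s
  eqvGen_const a θ := by
    -- `θ` and `const A (θ a)` are both left multiples of `Pi.mulSingle a (θ a)`
    have hsplit (φ : A → N) (hφ : φ a = θ a) : update φ a 1 * Pi.mulSingle a (θ a) = φ := by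
      funext b
      by_cases hb : b = a
      · subst hb; simp [hφ]
      · simp [hb]
    have h₁ := eqvGen_mul_of_mem_closure (mem_closure_mulSingle hS (update_self a 1 θ))
      (Pi.mulSingle a (θ a))
    have h₂ := eqvGen_mul_of_mem_closure
      (mem_closure_mulSingle hS (update_self a 1 (const A (θ a)))) (Pi.mulSingle a (θ a))
    rw [hsplit θ rfl] at h₁
    rw [hsplit (const A (θ a)) rfl] at h₂
    exact .trans _ _ _ (.symm _ _ h₁) h₂

end Collapsing

section Wreath

variable {M N A B X Y : Type*} [Monoid M] [Monoid N] {actA : A → M → A} {actB : B → N → B}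

theorem wreathMul_one_left (hA : IsAct actA) (e : A → N) (w : M × (A → N)) :
    wreathMul actA (1, e) w = (w.1, e * w.2) := by
  simp only [wreathMul, one_mul, hA.1]
  rfl

theorem wreathMul_const (m m' : M) (n n' : N) :
    wreathMul actA (m, const A n) (m', const A n') = (m * m', const A (n * n')) :=
  rfl

def wreathProj (πA : X × M → A) (πB : Y × N → B) : (X × Y) × (M × (A → N)) → A × B :=
  fun p => (πA (p.1.1, p.2.1), πB (p.1.2, p.2.2 (πA (p.1.1, 1))))

def wreathRels (RA : Set ((X × M) × (X × M))) (RB : Set ((Y × N) × (Y × N)))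
    (E : A → Set (A → N)) (πA : X × M → A) :
    Set (((X × Y) × (M × (A → N))) × ((X × Y) × (M × (A → N)))) :=
  Set.image2 (fun p y => (((p.1.1, y), (p.1.2, const A 1)), ((p.2.1, y), (p.2.2, const A 1))))
      RA Set.univ ∪
    Set.image2 (fun q x => (((x, q.1.1), (1, const A q.1.2)), ((x, q.2.1), (1, const A q.2.2))))
      RB Set.univ ∪
    ⋃ x, ⋃ y, (fun e => (((x, y), (1, 1)), ((x, y), (1, e)))) '' E (πA (x, 1))

variable {RA : Set ((X × M) × (X × M))} {RB : Set ((Y × N) × (Y × N))} {E : A → Set (A → N)}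
  {πA : X × M → A} {πB : Y × N → B}

theorem wreathRels_finite [Finite X] [Finite Y] (hRA : RA.Finite) (hRB : RB.Finite)
    (hE : ∀ a, (E a).Finite) : (wreathRels RA RB E πA).Finite :=
  ((hRA.image2 _ Set.finite_univ).union (hRB.image2 _ Set.finite_univ)).union
    (Set.finite_iUnion fun _ => Set.finite_iUnion fun _ => (hE _).image _)

variable (hA : IsAct actA)

local notation "FreeW" => @FreeAct (M × (A → N)) (WreathMonoid (N := N) actA hA) (X × Y)

theorem CongGen.wreathMul {p q : (X × Y) × (M × (A → N))}
    (h : CongGen FreeW (wreathRels RA RB E πA) p q) (w : M × (A → N)) :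
    CongGen FreeW (wreathRels RA RB E πA)
      (p.1, wreathMul actA p.2 w) (q.1, wreathMul actA q.2 w) :=
  h.act_right w

theorem congGen_wreathRels_const (hE : IsCollapsingFamily E) (x : X) (y : Y) (m : M)
    (θ : A → N) :
    CongGen FreeW (wreathRels RA RB E πA)
      ((x, y), (m, θ)) ((x, y), (m, const A (θ (πA (x, 1))))) :=
  CongGen.of_eqvGen (fun u => ((x, y), (m, u))) (fun u v ⟨e, he, hv⟩ => by
      have hmem : (((x, y), (1, 1)), ((x, y), (1, e))) ∈ wreathRels RA RB E πA :=
        Or.inr <| Set.mem_iUnion.mpr ⟨x, Set.mem_iUnion.mpr ⟨y, Set.mem_image_of_mem _ he⟩⟩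
      simpa [wreathMul_one_left hA, hv] using (CongGen.of_mem hmem).wreathMul hA (m, u))
    (hE.eqvGen_const _ θ)

theorem congGen_wreathRels_of_congGen_left {p q : X × M} (h : CongGen (FreeAct M X) RA p q)
    (y : Y) (n : N) :
    CongGen FreeW (wreathRels RA RB E πA)
      ((p.1, y), (p.2, const A n)) ((q.1, y), (q.2, const A n)) := by
  refine CongGen.map (f := fun p : X × M => ((p.1, y), (p.2, const A n)))
    (fun m => (m, const A 1)) (fun p m => ?_) (fun r hr => ?_) h
  · show ((p.1, y), (p.2 * m, const A n)) =
      ((p.1, y), wreathMul actA (p.2, const A n) (m, const A 1))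
    rw [wreathMul_const, mul_one]
  · have hmem : (((r.1.1, y), (r.1.2, const A 1)), ((r.2.1, y), (r.2.2, const A 1))) ∈
        wreathRels RA RB E πA :=
      Or.inl (Or.inl (Set.mem_image2_of_mem hr (Set.mem_univ y)))
    simpa only [wreathMul_const, mul_one, one_mul] using
      (CongGen.of_mem hmem).wreathMul hA (1, const A n)

theorem congGen_wreathRels_of_congGen_right {p q : Y × N} (h : CongGen (FreeAct N Y) RB p q)
    (x : X) (m : M) :
    CongGen FreeW (wreathRels RA RB E πA)
      ((x, p.1), (m, const A p.2)) ((x, q.1), (m, const A q.2)) := by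
  refine CongGen.map (f := fun p : Y × N => ((x, p.1), (m, const A p.2)))
    (fun n => (1, const A n)) (fun p n => ?_) (fun r hr => ?_) h
  · show ((x, p.1), (m, const A (p.2 * n))) =
      ((x, p.1), wreathMul actA (m, const A p.2) (1, const A n))
    rw [wreathMul_const, mul_one]
  · have hmem : (((x, r.1.1), (1, const A r.1.2)), ((x, r.2.1), (1, const A r.2.2))) ∈
        wreathRels RA RB E πA :=
      Or.inl (Or.inr (Set.mem_image2_of_mem hr (Set.mem_univ x)))
    simpa only [wreathMul_const, mul_one, one_mul] using
      (CongGen.of_mem hmem).wreathMul hA (m, const A 1)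

omit [Monoid N] in
theorem wreathProj_surjective (hπA : Surjective πA) (hπB : Surjective πB) :
    Surjective (wreathProj (N := N) πA πB) := by
  rintro ⟨a, b⟩
  obtain ⟨⟨x, m⟩, rfl⟩ := hπA a
  obtain ⟨⟨y, n⟩, rfl⟩ := hπB b
  exact ⟨((x, y), (m, const A n)), rfl⟩

section

variable (hPA : IsPresentation actA RA πA) (hPB : IsPresentation actB RB πB)
include hPA hPB

theorem wreathProj_freeAct (p : (X × Y) × (M × (A → N))) (w : M × (A → N)) :
    wreathProj πA πB (FreeW p w) = WreathAct actA actB (wreathProj πA πB p) w := by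
  obtain ⟨⟨x, y⟩, m, θ⟩ := p
  show (πA (x, m * w.1), πB (y, θ (πA (x, 1)) * w.2 (actA (πA (x, 1)) m))) =
    (actA (πA (x, m)) w.1, actB (πB (y, θ (πA (x, 1)))) (w.2 (πA (x, m))))
  rw [← hPA.map_mk]
  exact Prod.ext (hPA.map_act (x, m) w.1)
    (hPB.map_act (y, θ (πA (x, 1))) (w.2 (πA (x, m))))

theorem wreathProj_eq_of_mem (hE : IsCollapsingFamily E)
    {p : ((X × Y) × (M × (A → N))) × ((X × Y) × (M × (A → N)))}
    (hp : p ∈ wreathRels RA RB E πA) :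
    wreathProj πA πB p.1 = wreathProj πA πB p.2 := by
  rcases hp with (⟨r, hr, y, -, rfl⟩ | ⟨r, hr, x, -, rfl⟩) | hp
  · simp [wreathProj, hPA.map_eq_of_mem hr]
  · simp [wreathProj, hPB.map_eq_of_mem hr]
  · simp only [Set.mem_iUnion, Set.mem_image] at hp
    obtain ⟨x, y, e, he, rfl⟩ := hp
    simp [wreathProj, hE.apply_self _ e he]

theorem congGen_of_wreathProj_eq (hE : IsCollapsingFamily E) {w w' : (X × Y) × (M × (A → N))}
    (h : wreathProj πA πB w = wreathProj πA πB w') :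
    CongGen FreeW (wreathRels RA RB E πA) w w' := by
  obtain ⟨⟨x, y⟩, m, θ⟩ := w
  obtain ⟨⟨x', y'⟩, m', θ'⟩ := w'
  obtain ⟨hxm, hyn⟩ := Prod.ext_iff.mp h
  exact (congGen_wreathRels_const hA hE x y m θ).trans <|
    (congGen_wreathRels_of_congGen_left hA ((hPA.ker _ _).mp hxm) y _).trans <|
    (congGen_wreathRels_of_congGen_right hA ((hPB.ker _ _).mp hyn) x' m').trans
    (congGen_wreathRels_const hA hE x' y' m' θ').symm

theorem IsPresentation.wreath (hE : IsCollapsingFamily E) :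
    @IsPresentation (M × (A → N)) (X × Y) (A × B) (WreathMonoid (N := N) actA hA)
      (WreathAct actA actB) (wreathRels RA RB E πA) (wreathProj πA πB) := by
  let _ := WreathMonoid (N := N) actA hA
  refine ⟨wreathProj_surjective hPA.surjective hPB.surjective, wreathProj_freeAct hA hPA hPB,
    fun _ _ => ⟨congGen_of_wreathProj_eq hA hPA hPB hE, CongGen.apply_eq ?_ ?_⟩⟩
  · intro _ _ w h
    rw [wreathProj_freeAct hA hPA hPB, h, wreathProj_freeAct hA hPA hPB]
  · exact fun _ => wreathProj_eq_of_mem hPA hPB hE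

end

theorem actFP_wreathAct (hfpA : ActFP M actA) (hfpB : ActFP N actB) (hE : IsCollapsingFamily E) :
    @ActFP (M × (A → N)) (WreathMonoid (N := N) actA hA) (A × B) (WreathAct actA actB) := by
  obtain ⟨X, _, RA, hRA, πA, hPA⟩ := actFP_iff.mp hfpA
  obtain ⟨Y, _, RB, hRB, πB, hPB⟩ := actFP_iff.mp hfpB
  let _ := WreathMonoid (N := N) actA hA
  exact actFP_iff.mpr ⟨X × Y, inferInstance, _, wreathRels_finite hRA hRB hE.finite, _,
    hPA.wreath hA hPB hE⟩

end Wreath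

theorem stmt19_general {M N A B : Type*} [Monoid M] [Monoid N]
    (actA : A → M → A) (actB : B → N → B) (hA : IsAct actA)
    (hfpA : ActFP M actA) (hfpB : ActFP N actB)
    (hcond : (∀ a a' : A, a = a') ∨ (∀ n n' : N, n = n') ∨
      (∃ z : N, ∀ n : N, z * n = z) ∨
      (Finite A ∧ ∃ S : Set N, S.Finite ∧ Submonoid.closure S = ⊤)) :
    @ActFP (M × (A → N)) (WreathMonoid (N := N) actA hA) (A × B)
      (WreathAct actA actB) := by
  classical
  rcases hcond with hA1 | hN1 | ⟨z, hz⟩ | ⟨_, S, hSf, hS⟩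
  · exact actFP_wreathAct hA hfpA hfpB <|
      isCollapsingFamily_empty fun θ a b => congrArg θ (hA1 a b)
  · exact actFP_wreathAct hA hfpA hfpB <|
      isCollapsingFamily_empty fun θ a b => hN1 (θ a) (θ b)
  · exact actFP_wreathAct hA hfpA hfpB (isCollapsingFamily_of_leftZero hz)
  · exact actFP_wreathAct hA hfpA hfpB (isCollapsingFamily_mulSingle hSf hS)

/-- Let `A` be a finitely presented `M`-act and `B` a finitely presented `N`-act, and
suppose one of the following holds: (1) `A` is a one-element act; (2) `N` is trivial;
(3) `N` contains a left zero; (4) `A` is finite and `N` is a finitely generated monoid.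
Then the wreath product `A ≀ B` is a finitely presented `𝒲(M, N | A)`-act. -/
theorem stmt19 {M N A B : Type*} [Monoid M] [Monoid N] [Nonempty A] [Nonempty B]
    (actA : A → M → A) (actB : B → N → B) (hA : IsAct actA) (hB : IsAct actB)
    (hfpA : ActFP M actA) (hfpB : ActFP N actB)
    (hcond : (∀ a a' : A, a = a') ∨ (∀ n n' : N, n = n') ∨
      (∃ z : N, ∀ n : N, z * n = z) ∨
      (Finite A ∧ ∃ S : Set N, S.Finite ∧ Submonoid.closure S = ⊤)) :
    @ActFP (M × (A → N)) (WreathMonoid (N := N) actA hA) (A × B)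
      (WreathAct actA actB) :=
  stmt19_general actA actB hA hfpA hfpB hcond
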